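/- Let n, Mₙ be positive integers with 2Mₙ+1 ≤ n, and let a_k(ω) = exp(-i·2πkω)·sin(2π(Mₙ+1/2)k/n)/((2Mₙ+1)sin(πk/n)) for 1 ≤ k ≤ n-1. Then ∑_{k=1}^{n-1} |a_k(ω)|² ≤ min{ 2⌈n/(Mₙ+1/2)⌉ + (π²/3)·n²/(2Mₙ+1)², n-1 }. -/

import Mathlib

/-!
Write `m = 2Mₙ + 1`. Then `|a_k(ω)| = |sin (m x) / (m sin x)|` at `x = πk/n`. Since
`|sin (m x)| ≤ m |sin x|`, each term is at most `1`, giving `n - 1`. Jordan's inequality in the form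
`sin (π t) ≥ 2 min (t, 1 - t)` gives `|a_k|² ≤ n² / (4 m²) · (1/k² + 1/(n-k)²)`, and summing against
`ζ(2) = π²/6` yields `π² n² / (12 m²)`, a quarter of the term `π²/3 · n² / m²` of the first bound.
-/

namespace Real

theorem abs_sin_nat_mul_le (m : ℕ) (x : ℝ) : |sin (m * x)| ≤ m * |sin x| := by
  induction m with
  | zero => simp
  | succ m ih =>
    rw [Nat.cast_succ, add_one_mul, sin_add]
    calc |sin (m * x) * cos x + cos (m * x) * sin x|
        ≤ |sin (m * x)| * |cos x| + |cos (m * x)| * |sin x| := by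
          rw [← abs_mul, ← abs_mul]; exact abs_add_le _ _
      _ ≤ |sin (m * x)| * 1 + 1 * |sin x| := by
          gcongr <;> exact abs_cos_le_one _
      _ ≤ (m + 1) * |sin x| := by linarith

theorem two_mul_min_le_sin_pi_mul {t : ℝ} (h₀ : 0 ≤ t) (h₁ : t ≤ 1) :
    2 * min t (1 - t) ≤ sin (π * t) := by
  wlog ht : t ≤ 1 / 2 generalizing t
  · have h := this (t := 1 - t) (by linarith) (by linarith) (by linarith)
    rwa [sub_sub_cancel, min_comm, mul_one_sub, sin_pi_sub] at h
  calc 2 * min t (1 - t) ≤ 2 / π * (π * t) := by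
        rw [← mul_assoc, div_mul_cancel₀ _ pi_ne_zero]; gcongr; exact min_le_left _ _
    _ ≤ sin (π * t) := mul_le_sin (by positivity) (by nlinarith [pi_pos])

theorem inv_sin_pi_mul_sq_le {t : ℝ} (h₀ : 0 < t) (h₁ : t < 1) :
    ((sin (π * t)) ^ 2)⁻¹ ≤ ((t ^ 2)⁻¹ + ((1 - t) ^ 2)⁻¹) / 4 := by
  have hmin : 0 < min t (1 - t) := lt_min h₀ (by linarith)
  have hsin := two_mul_min_le_sin_pi_mul h₀.le h₁.le
  calc ((sin (π * t)) ^ 2)⁻¹ ≤ ((2 * min t (1 - t)) ^ 2)⁻¹ := by gcongr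
    _ = ((min t (1 - t)) ^ 2)⁻¹ / 4 := by ring
    _ ≤ ((t ^ 2)⁻¹ + ((1 - t) ^ 2)⁻¹) / 4 := by
        gcongr
        rcases min_choice t (1 - t) with h | h <;> rw [h] <;> simp [sq_nonneg]

-- The Dirichlet kernel `sin (m x) / sin x` normalised by its value `m` at `0`; it is `0` where
-- `m sin x = 0`.
noncomputable def dirichletRatio (m : ℕ) (x : ℝ) : ℝ := sin (m * x) / (m * sin x)

theorem dirichletRatio_sq_le_one (m : ℕ) (x : ℝ) : dirichletRatio m x ^ 2 ≤ 1 := by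
  rw [dirichletRatio, sq_le_one_iff_abs_le_one, abs_div, abs_mul, Nat.abs_cast]
  exact div_le_one_of_le₀ (abs_sin_nat_mul_le m x) (by positivity)

theorem dirichletRatio_sq_le (m : ℕ) (x : ℝ) :
    dirichletRatio m x ^ 2 ≤ (((m : ℝ) * sin x) ^ 2)⁻¹ := by
  rw [dirichletRatio, div_pow, div_eq_mul_inv]
  exact mul_le_of_le_one_left (by positivity) (sin_sq_le_one _)

theorem sum_Icc_inv_sq_le (n : ℕ) : ∑ k ∈ Finset.Icc 1 n, ((k : ℝ) ^ 2)⁻¹ ≤ π ^ 2 / 6 :=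
  sum_le_hasSum _ (fun _ _ => by positivity) (by simpa using hasSum_zeta_two)

theorem sum_Icc_inv_sq_sub_eq (n : ℕ) :
    ∑ k ∈ Finset.Icc 1 (n - 1), (((n : ℝ) - k) ^ 2)⁻¹ =
      ∑ k ∈ Finset.Icc 1 (n - 1), ((k : ℝ) ^ 2)⁻¹ := by
  refine Finset.sum_nbij' (n - ·) (n - ·) ?_ ?_ ?_ ?_ ?_ <;> intro k hk <;>
    simp only [Finset.mem_Icc] at hk ⊢
  all_goals try omega
  rw [Nat.cast_sub (by omega)]

theorem dirichletRatio_sq_le_of_mem_Icc {m n k : ℕ} (hk : k ∈ Finset.Icc 1 (n - 1)) :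
    dirichletRatio m (π * k / n) ^ 2 ≤
      (n : ℝ) ^ 2 / (4 * (m : ℝ) ^ 2) * (((k : ℝ) ^ 2)⁻¹ + (((n : ℝ) - k) ^ 2)⁻¹) := by
  rw [Finset.mem_Icc] at hk
  have hk₀ : (0 : ℝ) < k := by exact_mod_cast hk.1
  have hkn : (k : ℝ) < n := by exact_mod_cast (by omega : k < n)
  have hn : (0 : ℝ) < n := hk₀.trans hkn
  have hsin := inv_sin_pi_mul_sq_le (t := k / n) (by positivity) ((div_lt_one hn).2 hkn)
  rw [mul_div_assoc]
  calc dirichletRatio m (π * (k / n)) ^ 2 ≤ (((m : ℝ) * sin (π * (k / n))) ^ 2)⁻¹ :=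
        dirichletRatio_sq_le m _
    _ = ((m : ℝ) ^ 2)⁻¹ * ((sin (π * (k / n))) ^ 2)⁻¹ := by rw [mul_pow, mul_inv]
    _ ≤ ((m : ℝ) ^ 2)⁻¹ * ((((k : ℝ) / n) ^ 2)⁻¹ + ((1 - (k : ℝ) / n) ^ 2)⁻¹) / 4 := by
        rw [mul_div_assoc]; gcongr
    _ = _ := by
        rw [one_sub_div hn.ne']
        field_simp

theorem sum_dirichletRatio_sq_le (m n : ℕ) :
    ∑ k ∈ Finset.Icc 1 (n - 1), dirichletRatio m (π * k / n) ^ 2 ≤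
      π ^ 2 / 12 * (n : ℝ) ^ 2 / (m : ℝ) ^ 2 :=
  calc ∑ k ∈ Finset.Icc 1 (n - 1), dirichletRatio m (π * k / n) ^ 2
      ≤ ∑ k ∈ Finset.Icc 1 (n - 1),
          (n : ℝ) ^ 2 / (4 * (m : ℝ) ^ 2) * (((k : ℝ) ^ 2)⁻¹ + (((n : ℝ) - k) ^ 2)⁻¹) :=
        Finset.sum_le_sum fun _ => dirichletRatio_sq_le_of_mem_Icc
    _ = (n : ℝ) ^ 2 / (4 * (m : ℝ) ^ 2) * (2 * ∑ k ∈ Finset.Icc 1 (n - 1), ((k : ℝ) ^ 2)⁻¹) := by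
        rw [← Finset.mul_sum, Finset.sum_add_distrib, sum_Icc_inv_sq_sub_eq, two_mul]
    _ ≤ (n : ℝ) ^ 2 / (4 * (m : ℝ) ^ 2) * (2 * (π ^ 2 / 6)) := by
        gcongr; exact sum_Icc_inv_sq_le _
    _ = π ^ 2 / 12 * (n : ℝ) ^ 2 / (m : ℝ) ^ 2 := by
        rcases eq_or_ne (m : ℝ) 0 with hm | hm
        · simp [hm]
        · field_simp; ring

end Real

open Real Complex

theorem stmt_7_general (n Mn : ℕ) (hn : 0 < n) (ω : ℝ)
    (a : ℕ → ℂ)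
    (ha : ∀ k, 1 ≤ k → k ≤ n - 1 →
      a k = Complex.exp (-(Complex.I) * (2 * π * k * ω)) *
        ((Real.sin (2 * π * ((Mn : ℝ) + 1 / 2) * k / n) /
          ((2 * (Mn : ℝ) + 1) * Real.sin (π * k / n)) : ℝ) : ℂ)) :
    ∑ k ∈ Finset.Icc 1 (n - 1), ‖a k‖ ^ 2 ≤
      min (2 * (⌈(n : ℝ) / ((Mn : ℝ) + 1 / 2)⌉ : ℝ) + (π ^ 2 / 3) * (n : ℝ) ^ 2 / (2 * (Mn : ℝ) + 1) ^ 2)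
        ((n : ℝ) - 1) := by
  have hm : ((2 * Mn + 1 : ℕ) : ℝ) = 2 * (Mn : ℝ) + 1 := by push_cast; ring
  have hterm : ∀ k ∈ Finset.Icc 1 (n - 1),
      ‖a k‖ ^ 2 = dirichletRatio (2 * Mn + 1) (π * k / n) ^ 2 := by
    intro k hk
    rw [Finset.mem_Icc] at hk
    simp only [ha k hk.1 hk.2, dirichletRatio, hm, ← ofReal_ofNat, ← ofReal_mul, ← ofReal_natCast,
      neg_mul, ← mul_neg, ← ofReal_neg, Complex.norm_mul, norm_exp_I_mul_ofReal, norm_real,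
      norm_eq_abs, one_mul, sq_abs]
    congr 4; ring
  rw [Finset.sum_congr rfl hterm]
  refine le_min ?_ ?_
  · calc _ ≤ π ^ 2 / 12 * (n : ℝ) ^ 2 / (2 * (Mn : ℝ) + 1) ^ 2 := by
          simpa only [hm] using sum_dirichletRatio_sq_le (2 * Mn + 1) n
      _ ≤ π ^ 2 / 3 * (n : ℝ) ^ 2 / (2 * (Mn : ℝ) + 1) ^ 2 := by gcongr; norm_num
      _ ≤ _ := le_add_of_nonneg_left (by positivity)
  · calc _ ≤ ∑ _k ∈ Finset.Icc 1 (n - 1), (1 : ℝ) :=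
          Finset.sum_le_sum fun _ _ => dirichletRatio_sq_le_one _ _
      _ = (n : ℝ) - 1 := by simp [Nat.cast_sub hn]

theorem stmt_7 (n Mn : ℕ) (hn : 0 < n) (hMn : 0 < Mn) (hle : 2 * Mn + 1 ≤ n) (ω : ℝ)
    (a : ℕ → ℂ)
    (ha : ∀ k, 1 ≤ k → k ≤ n - 1 →
      a k = Complex.exp (-(Complex.I) * (2 * π * k * ω)) *
        ((Real.sin (2 * π * ((Mn : ℝ) + 1 / 2) * k / n) /
          ((2 * (Mn : ℝ) + 1) * Real.sin (π * k / n)) : ℝ) : ℂ)) :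
    ∑ k ∈ Finset.Icc 1 (n - 1), ‖a k‖ ^ 2 ≤
      min (2 * (⌈(n : ℝ) / ((Mn : ℝ) + 1 / 2)⌉ : ℝ) + (π ^ 2 / 3) * (n : ℝ) ^ 2 / (2 * (Mn : ℝ) + 1) ^ 2)
        ((n : ℝ) - 1) :=
  stmt_7_general n Mn hn ω a ha
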